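/- (1) There is a formula that is (n+1)-step inductive for every n ∈ ℕ but is not p-inductive. (2) For every n ∈ ℕ, there is a p-inductive formula that is not (n+1)-inductive. -/

import Mathlib

open FirstOrder Language

/-! ### The language `L_OR = {0, 1, +, ×, <}` of ordered rings -/

/-- Function symbols of the language of ordered rings. -/
inductive LorFunc : ℕ → Type
  | zero : LorFunc 0
  | one : LorFunc 0
  | add : LorFunc 2
  | mul : LorFunc 2

/-- Relation symbols of the language of ordered rings: just `<`. -/
inductive LorRel : ℕ → Type
  | lt : LorRel 2

/-- The first-order language of ordered rings. -/
def Lor : Language := ⟨LorFunc, LorRel⟩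

/-- The term `0`. -/
def zeroT {α : Type} : Lor.Term α := Constants.term LorFunc.zero

/-- The term `1`. -/
def oneT {α : Type} : Lor.Term α := Constants.term LorFunc.one

/-- Addition of terms. -/
def addT {α : Type} (t u : Lor.Term α) : Lor.Term α := Functions.apply₂ LorFunc.add t u

/-- Multiplication of terms. -/
def mulT {α : Type} (t u : Lor.Term α) : Lor.Term α := Functions.apply₂ LorFunc.mul t u

/-- The term `2`, an abbreviation for `1 + 1`. -/
def twoT {α : Type} : Lor.Term α := addT oneT oneT

/-- The numeral `k`, i.e. the closed term `(⋯((0+1)+1)+⋯+1)` with `k` ones. -/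
def numT {α : Type} : ℕ → Lor.Term α
  | 0 => zeroT
  | n + 1 => addT (numT n) oneT

/-- The bounded formula `t < u`. -/
def ltBF {α : Type} {n : ℕ} (t u : Lor.Term (α ⊕ Fin n)) : Lor.BoundedFormula α n :=
  Relations.boundedFormula₂ LorRel.lt t u

/-- The formula `t < u`. -/
def ltFml {α : Type} (t u : Lor.Term α) : Lor.Formula α :=
  Relations.formula₂ LorRel.lt t u

/-- The formula `t ≤ u`, an abbreviation for `t < u ∨ t = u`. -/
def leFml {α : Type} (t u : Lor.Term α) : Lor.Formula α :=
  ltFml t u ⊔ Term.equal t u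

/-! ### The base theory `PA⁻` -/

/-- `PA⁻`, the theory of non-negative parts of discretely ordered rings. -/
def PAminus : Lor.Theory :=
  { -- (P1) associativity of +
    ∀' ∀' ∀' (addT (addT &0 &1) &2 =' addT &0 (addT &1 &2)),
    -- (P2) commutativity of +
    ∀' ∀' (addT &0 &1 =' addT &1 &0),
    -- (P3) associativity of ×
    ∀' ∀' ∀' (mulT (mulT &0 &1) &2 =' mulT &0 (mulT &1 &2)),
    -- (P4) commutativity of ×
    ∀' ∀' (mulT &0 &1 =' mulT &1 &0),
    -- (P5) distributivity
    ∀' ∀' ∀' (mulT &0 (addT &1 &2) =' addT (mulT &0 &1) (mulT &0 &2)),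
    -- (P6) x + 0 = x
    ∀' (addT &0 zeroT =' &0),
    -- (P7) x × 0 = 0
    ∀' (mulT &0 zeroT =' zeroT),
    -- (P8) x × 1 = x
    ∀' (mulT &0 oneT =' &0),
    -- (P9) transitivity of <
    ∀' ∀' ∀' (ltBF &0 &1 ⊓ ltBF &1 &2 ⟹ ltBF &0 &2),
    -- (P10) irreflexivity of <
    ∀' ∼(ltBF &0 &0),
    -- (P11) linearity of <
    ∀' ∀' (ltBF &0 &1 ⊔ &0 =' &1 ⊔ ltBF &1 &0),
    -- (P12) x < y → x + z < y + z
    ∀' ∀' ∀' (ltBF &0 &1 ⟹ ltBF (addT &0 &2) (addT &1 &2)),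
    -- (P13) z ≠ 0 ∧ x < y → x × z < y × z
    ∀' ∀' ∀' (∼(&2 =' zeroT) ⊓ ltBF &0 &1 ⟹ ltBF (mulT &0 &2) (mulT &1 &2)),
    -- (P14) x < y ↔ ∃z ((x + z) + 1 = y)
    ∀' ∀' (ltBF &0 &1 ⇔ ∃' (addT (addT &0 &2) oneT =' &1)),
    -- (P15) 0 < 1 ∧ (x > 0 → x ≥ 1)
    ltBF zeroT oneT ⊓ ∀' (ltBF zeroT &0 ⟹ ltBF oneT &0 ⊔ oneT =' &0),
    -- (P16) x ≥ 0
    ∀' (ltBF zeroT &0 ⊔ zeroT =' &0) }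

/-! ### Formulas `θ(x, z̄)` with a distinguished variable `x` and parameters `z̄`

A formula `θ(x, z̄)` with `m` parameters `z̄` and a distinguished induction
variable `x` is represented as `θ : Lor.Formula (Fin m ⊕ Fin 1)`, where the
`Fin m` component gives the parameters and the `Fin 1` component gives `x`. -/

/-- The distinguished variable `x` as a term. -/
def xT {m : ℕ} : Lor.Term (Fin m ⊕ Fin 1) := Term.var (Sum.inr 0)

/-- `θ(t, z̄)`, where `t` is a term possibly involving `x` and the parameters. -/
def substX {m : ℕ} (θ : Lor.Formula (Fin m ⊕ Fin 1)) (t : Lor.Term (Fin m ⊕ Fin 1)) :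
    Lor.Formula (Fin m ⊕ Fin 1) :=
  θ.subst (Sum.elim (fun i => Term.var (Sum.inl i)) fun _ => t)

/-- `θ(t, z̄)` where `t` is a term in the parameters only. -/
def substP {m : ℕ} (θ : Lor.Formula (Fin m ⊕ Fin 1)) (t : Lor.Term (Fin m)) :
    Lor.Formula (Fin m) :=
  θ.subst (Sum.elim (fun i => Term.var i) fun _ => t)

/-- `∀x θ(x, z̄)`. -/
noncomputable def allX {m : ℕ} (θ : Lor.Formula (Fin m ⊕ Fin 1)) : Lor.Formula (Fin m) :=
  Formula.iAlls (Fin 1) θ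

/-- The universal closure of a formula, as a sentence. -/
noncomputable def closeAll {α : Type} [Finite α] (φ : Lor.Formula α) : Lor.Sentence :=
  Formula.iAlls α (φ.relabel (Sum.inr : α → Empty ⊕ α))

/-- `∀x' < x, θ(x', z̄)`, a formula with free variable `x` (and parameters). -/
noncomputable def allLtX {m : ℕ} (θ : Lor.Formula (Fin m ⊕ Fin 1)) :
    Lor.Formula (Fin m ⊕ Fin 1) :=
  Formula.iAlls (Fin 1)
    (ltFml (Term.var (Sum.inr 0)) (Term.var (Sum.inl (Sum.inr 0))) ⟹
      θ.relabel (Sum.elim (fun i => Sum.inl (Sum.inl i)) fun _ => Sum.inr 0))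

/-- `∀x' ≤ x, θ(x', z̄)`, a formula with free variable `x` (and parameters). -/
noncomputable def allLeX {m : ℕ} (θ : Lor.Formula (Fin m ⊕ Fin 1)) :
    Lor.Formula (Fin m ⊕ Fin 1) :=
  Formula.iAlls (Fin 1)
    (leFml (Term.var (Sum.inr 0)) (Term.var (Sum.inl (Sum.inr 0))) ⟹
      θ.relabel (Sum.elim (fun i => Sum.inl (Sum.inl i)) fun _ => Sum.inr 0))

/-- The conjunction `⋀_{k<j} θ(k, z̄)`. -/
def conjNum {m : ℕ} (θ : Lor.Formula (Fin m ⊕ Fin 1)) : ℕ → Lor.Formula (Fin m)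
  | 0 => ⊤
  | j + 1 => conjNum θ j ⊓ substP θ (numT j)

/-- The conjunction `⋀_{k<j} θ(x+k, z̄)`. -/
def conjShift {m : ℕ} (θ : Lor.Formula (Fin m ⊕ Fin 1)) : ℕ → Lor.Formula (Fin m ⊕ Fin 1)
  | 0 => ⊤
  | j + 1 => conjShift θ j ⊓ substX θ (addT xT (numT j))

/-! ### Induction axioms -/

/-- The induction axiom `I_x θ`:
`∀z̄( θ(0,z̄) ∧ ∀x(θ(x,z̄) → θ(x+1,z̄)) → ∀x θ(x,z̄) )`. -/
noncomputable def indAx {m : ℕ} (θ : Lor.Formula (Fin m ⊕ Fin 1)) : Lor.Sentence :=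
  closeAll ((substP θ zeroT ⊓ allX (θ ⟹ substX θ (addT xT oneT))) ⟹ allX θ)

/-- The `<`-induction axiom `I^<_x θ`:
`∀z̄( ∀y(∀x<y θ(x,z̄) → θ(y,z̄)) → ∀x θ(x,z̄) )`. -/
noncomputable def indLtAx {m : ℕ} (θ : Lor.Formula (Fin m ⊕ Fin 1)) : Lor.Sentence :=
  closeAll (allX (allLtX θ ⟹ θ) ⟹ allX θ)

/-- The `(n+1)`-step induction axiom `I^{(n+1)-step}_x θ`:
`∀z̄( ⋀_{k<n+1} θ(k,z̄) ∧ ∀x(θ(x,z̄) → θ(x+n+1,z̄)) → ∀x θ(x,z̄) )`. -/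
noncomputable def indStepAx {m : ℕ} (n : ℕ) (θ : Lor.Formula (Fin m ⊕ Fin 1)) : Lor.Sentence :=
  closeAll ((conjNum θ (n + 1) ⊓ allX (θ ⟹ substX θ (addT xT (numT (n + 1))))) ⟹ allX θ)

/-- The `(n+1)`-induction axiom `I^{n+1}_x θ`:
`∀z̄( ⋀_{k<n+1} θ(k,z̄) ∧ ∀x(⋀_{k<n+1} θ(x+k,z̄) → θ(x+n+1,z̄)) → ∀x θ(x,z̄) )`. -/
noncomputable def indKAx {m : ℕ} (n : ℕ) (θ : Lor.Formula (Fin m ⊕ Fin 1)) : Lor.Sentence :=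
  closeAll ((conjNum θ (n + 1) ⊓ allX (conjShift θ (n + 1) ⟹ substX θ (addT xT (numT (n + 1))))) ⟹
    allX θ)

/-- The polynomial induction axiom `I^p_x θ`:
`∀z̄( θ(0,z̄) ∧ ∀x(θ(x,z̄) → θ(2x,z̄) ∧ θ(2x+1,z̄)) → ∀x θ(x,z̄) )`, where `2x` is `(1+1)×x`. -/
noncomputable def indPAx {m : ℕ} (θ : Lor.Formula (Fin m ⊕ Fin 1)) : Lor.Sentence :=
  closeAll ((substP θ zeroT ⊓
      allX (θ ⟹ substX θ (mulT twoT xT) ⊓ substX θ (addT (mulT twoT xT) oneT))) ⟹ allX θ)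

/-! ### Theories -/

/-- Peano arithmetic: `PA⁻` plus induction for all `L_OR` formulas. -/
noncomputable def PA : Lor.Theory :=
  PAminus ∪ {σ | ∃ (m : ℕ) (θ : Lor.Formula (Fin m ⊕ Fin 1)), σ = indAx θ}

/-- `IOpen`: `PA⁻` plus induction for all quantifier-free `L_OR` formulas. -/
noncomputable def IOpen : Lor.Theory :=
  PAminus ∪ {σ | ∃ (m : ℕ) (θ : Lor.Formula (Fin m ⊕ Fin 1)), θ.IsQF ∧ σ = indAx θ}

/-! ### Notions of inductiveness

A formula `φ(x)` with exactly one free variable `x` is represented as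
`φ : Lor.Formula (Fin 0 ⊕ Fin 1)` (no parameters). -/

/-- Formulas `φ(x)` with exactly one free variable `x`. -/
abbrev OneVarFormula : Type := Lor.Formula (Fin 0 ⊕ Fin 1)

/-- The sentence `∀x φ(x)`. -/
noncomputable def allS (φ : OneVarFormula) : Lor.Sentence := closeAll (allX φ)

/-- `φ(x)` is inductive: `PA⁻ ⊢ φ(0)` and `PA⁻ ⊢ ∀x(φ(x) → φ(x+1))`. -/
noncomputable def IsInductive (φ : OneVarFormula) : Prop :=
  PAminus ⊨ᵇ closeAll (substP φ zeroT) ∧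
    PAminus ⊨ᵇ closeAll (allX (φ ⟹ substX φ (addT xT oneT)))

/-- `φ(x)` is `<`-inductive: `PA⁻ ⊢ ∀y(∀x<y φ(x) → φ(y))`. -/
noncomputable def IsLtInductive (φ : OneVarFormula) : Prop :=
  PAminus ⊨ᵇ closeAll (allX (allLtX φ ⟹ φ))

/-- `φ(x)` is `(n+1)`-step inductive:
`PA⁻ ⊢ ⋀_{k<n+1} φ(k) ∧ ∀x(φ(x) → φ(x+n+1))`. -/
noncomputable def IsStepInductive (n : ℕ) (φ : OneVarFormula) : Prop :=
  PAminus ⊨ᵇ closeAll (conjNum φ (n + 1) ⊓ allX (φ ⟹ substX φ (addT xT (numT (n + 1)))))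

/-- `φ(x)` is `(n+1)`-inductive:
`PA⁻ ⊢ ⋀_{k<n+1} φ(k) ∧ ∀x(⋀_{k<n+1} φ(x+k) → φ(x+n+1))`. -/
noncomputable def IsKInductive (n : ℕ) (φ : OneVarFormula) : Prop :=
  PAminus ⊨ᵇ
    closeAll (conjNum φ (n + 1) ⊓ allX (conjShift φ (n + 1) ⟹ substX φ (addT xT (numT (n + 1)))))

/-- `φ(x)` is p-inductive (polynomially inductive):
`PA⁻ ⊢ φ(0) ∧ ∀x(φ(x) → φ(2x) ∧ φ(2x+1))`. -/
noncomputable def IsPInductive (φ : OneVarFormula) : Prop :=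
  PAminus ⊨ᵇ closeAll (substP φ zeroT ⊓
    allX (φ ⟹ substX φ (mulT twoT xT) ⊓ substX φ (addT (mulT twoT xT) oneT)))

/-! ### Cuts -/

/-- `φ(x)` is a cut: an inductive formula with `PA⁻ ⊢ ∀x∀y(x<y ∧ φ(y) → φ(x))`. -/
noncomputable def IsCut (φ : OneVarFormula) : Prop :=
  IsInductive φ ∧
    PAminus ⊨ᵇ closeAll
      (ltFml (Term.var (Sum.inr 0) : Lor.Term (Fin 0 ⊕ Fin 2)) (Term.var (Sum.inr 1)) ⊓
          φ.relabel (Sum.elim (fun i => Sum.inl i) fun _ => Sum.inr 1) ⟹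
        φ.relabel (Sum.elim (fun i => Sum.inl i) fun _ => Sum.inr 0))

/-- `φ(x)` is an a-cut: a cut with `PA⁻ ⊢ ∀x(φ(x) → φ(x+x))`. -/
noncomputable def IsACut (φ : OneVarFormula) : Prop :=
  IsCut φ ∧ PAminus ⊨ᵇ closeAll (allX (φ ⟹ substX φ (addT xT xT)))

/-- `φ(x)` is an am-cut: an a-cut with `PA⁻ ⊢ ∀x(φ(x) → φ(x×x))`. -/
noncomputable def IsAMCut (φ : OneVarFormula) : Prop :=
  IsACut φ ∧ PAminus ⊨ᵇ closeAll (allX (φ ⟹ substX φ (mulT xT xT)))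

/-! Every model of `PA⁻` is an ordered commutative semiring, so both halves reduce to algebra.

The formula `∃ y, y·y ≤ x < (y+1)·(y+1)` is closed under `x ↦ x + 1`, hence `(n+1)`-step
inductive for every `n`. In the non-negative part of `ℤ[X]`, ordered by the sign of the leading
coefficient, it holds at `X²` but fails at `2X²`: a floor square root of `2X²` would have degree
one and a leading coefficient whose square is `2`.

The formula `ψₙ(x)`: "`x ≡ k (mod n+2)` for some `k ≤ n`, or `x = (n+2)·y + (n+1)` with `y`
even or odd" is closed under `x ↦ 2x, 2x+1`, because doubling makes the quotient even. In
`ℤ[X]⁺` it holds at `(n+2)·X + k` for all `k ≤ n` but not at `(n+2)·X + (n+1)`, since `X` is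
neither even nor odd. -/

section Operations
variable {M : Type} [Lor.Structure M]

instance : Zero M := ⟨constantMap (L := Lor) LorFunc.zero⟩
instance : One M := ⟨constantMap (L := Lor) LorFunc.one⟩
instance : Add M := ⟨fun a b => Structure.funMap (L := Lor) LorFunc.add ![a, b]⟩
instance : Mul M := ⟨fun a b => Structure.funMap (L := Lor) LorFunc.mul ![a, b]⟩
instance : LT M := ⟨fun a b => Structure.RelMap (L := Lor) LorRel.lt ![a, b]⟩

variable {α : Type} (v : α → M)

@[simp] theorem realize_zeroT : (zeroT : Lor.Term α).realize v = 0 := Term.realize_constants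

@[simp] theorem realize_oneT : (oneT : Lor.Term α).realize v = 1 := Term.realize_constants

@[simp] theorem realize_addT (t u : Lor.Term α) :
    (addT t u).realize v = t.realize v + u.realize v :=
  Term.realize_functions_apply₂

@[simp] theorem realize_mulT (t u : Lor.Term α) :
    (mulT t u).realize v = t.realize v * u.realize v :=
  Term.realize_functions_apply₂

@[simp] theorem realize_ltBF {n : ℕ} (xs : Fin n → M) (t u : Lor.Term (α ⊕ Fin n)) :
    (ltBF t u).Realize v xs ↔ t.realize (Sum.elim v xs) < u.realize (Sum.elim v xs) :=
  BoundedFormula.realize_rel₂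

end Operations

/-- The axioms (P1)–(P16) of `PAminus` in order, with (P15) split into two fields. -/
structure PAminusAxioms (M : Type) [Lor.Structure M] : Prop where
  add_assoc : ∀ a b c : M, a + b + c = a + (b + c)
  add_comm : ∀ a b : M, a + b = b + a
  mul_assoc : ∀ a b c : M, a * b * c = a * (b * c)
  mul_comm : ∀ a b : M, a * b = b * a
  mul_add : ∀ a b c : M, a * (b + c) = a * b + a * c
  add_zero : ∀ a : M, a + 0 = a
  mul_zero : ∀ a : M, a * 0 = 0
  mul_one : ∀ a : M, a * 1 = a
  lt_trans : ∀ a b c : M, a < b → b < c → a < c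
  lt_irrefl : ∀ a : M, ¬a < a
  lt_trichotomy : ∀ a b : M, (a < b ∨ a = b) ∨ b < a
  add_lt_add_right : ∀ a b c : M, a < b → a + c < b + c
  mul_lt_mul_right : ∀ a b c : M, ¬c = 0 → a < b → a * c < b * c
  lt_iff_exists_add_one : ∀ a b : M, a < b ↔ ∃ c, a + c + 1 = b
  zero_lt_one : (0 : M) < 1
  one_le_of_pos : ∀ a : M, 0 < a → 1 < a ∨ 1 = a
  zero_le : ∀ a : M, 0 < a ∨ 0 = a

theorem model_PAminus_iff {M : Type} [Lor.Structure M] : M ⊨ PAminus ↔ PAminusAxioms M := by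
  simp only [Theory.model_iff, PAminus, Set.mem_insert_iff, Set.mem_singleton_iff,
    forall_eq_or_imp, forall_eq, Sentence.Realize, Formula.Realize, BoundedFormula.realize_all,
    BoundedFormula.realize_imp, BoundedFormula.realize_inf, BoundedFormula.realize_sup,
    BoundedFormula.realize_not, BoundedFormula.realize_iff, BoundedFormula.realize_ex,
    BoundedFormula.realize_bdEqual, realize_ltBF, realize_addT, realize_mulT, realize_zeroT,
    realize_oneT, and_imp]
  exact ⟨fun ⟨h1, h2, h3, h4, h5, h6, h7, h8, h9, h10, h11, h12, h13, h14, ⟨h15, h16⟩, h17⟩ =>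
    ⟨h1, h2, h3, h4, h5, h6, h7, h8, h9, h10, h11, h12, h13, h14, h15, h16, h17⟩,
    fun ⟨h1, h2, h3, h4, h5, h6, h7, h8, h9, h10, h11, h12, h13, h14, h15, h16, h17⟩ =>
    ⟨h1, h2, h3, h4, h5, h6, h7, h8, h9, h10, h11, h12, h13, h14, ⟨h15, h16⟩, h17⟩⟩

namespace PAminus

variable {M : Type} [Lor.Structure M] [h : M ⊨ PAminus]

theorem axioms : PAminusAxioms M := model_PAminus_iff.1 h

noncomputable instance : CommSemiring M where
  add_assoc := axioms.add_assoc
  add_comm := axioms.add_comm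
  add_zero := axioms.add_zero
  zero_add a := by rw [axioms.add_comm]; exact axioms.add_zero a
  mul_assoc := axioms.mul_assoc
  mul_comm := axioms.mul_comm
  mul_one := axioms.mul_one
  one_mul a := by rw [axioms.mul_comm]; exact axioms.mul_one a
  mul_zero := axioms.mul_zero
  zero_mul a := by rw [axioms.mul_comm]; exact axioms.mul_zero a
  left_distrib := axioms.mul_add
  right_distrib a b c := by simp only [axioms.mul_comm _ c, axioms.mul_add]
  nsmul := nsmulRec

noncomputable instance : LinearOrder M where
  le a b := a < b ∨ a = b
  le_refl a := Or.inr rfl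
  le_trans a b c := by
    rintro (hab | rfl) (hbc | rfl)
    exacts [Or.inl (axioms.lt_trans a b c hab hbc), Or.inl hab, Or.inl hbc, Or.inr rfl]
  le_antisymm a b := by
    rintro (hab | rfl) (hba | hba)
    exacts [(axioms.lt_irrefl a (axioms.lt_trans a b a hab hba)).elim, hba.symm, rfl, rfl]
  le_total a b := by
    rcases axioms.lt_trichotomy a b with (h | h) | h
    exacts [Or.inl (Or.inl h), Or.inl (Or.inr h), Or.inr (Or.inl h)]
  lt_iff_le_not_ge a b := by
    refine ⟨fun hab => ⟨Or.inl hab, ?_⟩, ?_⟩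
    · rintro (hba | rfl)
      exacts [axioms.lt_irrefl a (axioms.lt_trans a b a hab hba), axioms.lt_irrefl b hab]
    · rintro ⟨hab | rfl, hba⟩
      exacts [hab, (hba (Or.inr rfl)).elim]
  toDecidableLE := Classical.decRel _

instance : IsStrictOrderedRing M :=
  { IsOrderedCancelAddMonoid.of_add_lt_add_left fun a b c h => by
      simpa only [add_comm a] using axioms.add_lt_add_right b c a h with
    zero_le_one := Or.inl axioms.zero_lt_one
    exists_pair_ne := ⟨0, 1, ne_of_lt axioms.zero_lt_one⟩
    mul_lt_mul_of_pos_left := fun c hc a b h => by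
      simpa only [mul_comm c] using axioms.mul_lt_mul_right a b c (ne_of_gt hc) h
    mul_lt_mul_of_pos_right := fun c hc a b h => axioms.mul_lt_mul_right a b c (ne_of_gt hc) h }

instance : CanonicallyOrderedAdd M where
  exists_add_of_le {a b} := by
    rintro (h | rfl)
    · obtain ⟨c, rfl⟩ := (axioms.lt_iff_exists_add_one a b).1 h
      exact ⟨c + 1, add_assoc a c 1⟩
    · exact ⟨0, (add_zero a).symm⟩
  le_add_self a b := by simpa using add_le_add_right (show 0 ≤ b from axioms.zero_le b) a
  le_self_add a b := by simpa using add_le_add_left (show 0 ≤ b from axioms.zero_le b) a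

theorem add_one_le_of_lt {a b : M} (h : a < b) : a + 1 ≤ b := by
  obtain ⟨c, rfl⟩ := (axioms.lt_iff_exists_add_one a b).1 h
  simpa only [add_right_comm a c 1] using le_self_add

end PAminus

@[simp] theorem realize_numT {M : Type} [Lor.Structure M] [M ⊨ PAminus] {α : Type} (v : α → M)
    (k : ℕ) : (numT k : Lor.Term α).realize v = k := by
  induction k with
  | zero => exact (realize_zeroT v).trans Nat.cast_zero.symm
  | succ k ih => rw [numT, realize_addT, ih, realize_oneT, Nat.cast_succ]

theorem realize_closeAll {M : Type} [Lor.Structure M] {α : Type} [Finite α] (φ : Lor.Formula α) :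
    M ⊨ closeAll φ ↔ ∀ v : α → M, φ.Realize v := by
  rw [closeAll, Sentence.Realize, Formula.realize_iAlls]
  simp only [Formula.realize_relabel]
  exact Iff.rfl

theorem models_closeAll_iff {α : Type} [Finite α] (φ : Lor.Formula α) :
    PAminus ⊨ᵇ closeAll φ ↔
      ∀ (M : Type) [Lor.Structure M] [M ⊨ PAminus] (v : α → M), φ.Realize v := by
  refine ⟨fun h M _ _ => ?_, fun h M v xs => ?_⟩
  · have : Nonempty M := ⟨0⟩
    exact (realize_closeAll φ).1 (h.realize_sentence M)
  · rw [Subsingleton.elim v default, Subsingleton.elim xs default]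
    exact (realize_closeAll φ).2 (h M)

namespace OneVarFormula
variable {M : Type} [Lor.Structure M]

def Holds (φ : OneVarFormula) (x : M) : Prop := φ.Realize (Sum.elim default fun _ => x)

theorem realize_iff_holds (φ : OneVarFormula) (w : Fin 0 ⊕ Fin 1 → M) :
    φ.Realize w ↔ φ.Holds (w (Sum.inr 0)) := by
  refine iff_of_eq (congrArg _ (funext ?_))
  rintro (i | i)
  exacts [i.elim0, congrArg w (congrArg Sum.inr (Subsingleton.elim i 0))]

@[simp] theorem realize_substX (φ : OneVarFormula) (t : Lor.Term (Fin 0 ⊕ Fin 1))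
    (w : Fin 0 ⊕ Fin 1 → M) : (substX φ t).Realize w ↔ φ.Holds (t.realize w) := by
  rw [substX, Formula.Realize, BoundedFormula.realize_subst, ← Formula.Realize, realize_iff_holds]
  rfl

@[simp] theorem realize_substP (φ : OneVarFormula) (t : Lor.Term (Fin 0)) (v : Fin 0 → M) :
    (substP φ t).Realize v ↔ φ.Holds (t.realize v) := by
  rw [substP, Formula.Realize, BoundedFormula.realize_subst, ← Formula.Realize, realize_iff_holds]
  rfl

@[simp] theorem holds_imp (φ ψ : OneVarFormula) (x : M) :
    Holds (φ ⟹ ψ) x ↔ (φ.Holds x → ψ.Holds x) :=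
  Formula.realize_imp

@[simp] theorem holds_inf (φ ψ : OneVarFormula) (x : M) :
    Holds (φ ⊓ ψ) x ↔ φ.Holds x ∧ ψ.Holds x :=
  Formula.realize_inf

@[simp] theorem holds_substX (φ : OneVarFormula) (t : Lor.Term (Fin 0 ⊕ Fin 1)) (x : M) :
    Holds (substX φ t) x ↔ φ.Holds (t.realize (Sum.elim default fun _ => x)) :=
  realize_substX φ t _

@[simp] theorem realize_allX (φ : OneVarFormula) (v : Fin 0 → M) :
    (allX φ).Realize v ↔ ∀ x : M, φ.Holds x := by
  rw [allX, Formula.realize_iAlls]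
  refine ⟨fun h x => (realize_iff_holds φ _).1 (h fun _ => x), fun h i => ?_⟩
  rw [realize_iff_holds]
  exact h _

@[simp] theorem realize_xT (w : Fin 0 ⊕ Fin 1 → M) :
    (xT : Lor.Term (Fin 0 ⊕ Fin 1)).realize w = w (Sum.inr 0) :=
  rfl

variable [M ⊨ PAminus]

theorem realize_conjNum (φ : OneVarFormula) (j : ℕ) (v : Fin 0 → M) :
    (conjNum φ j).Realize v ↔ ∀ k < j, φ.Holds (k : M) := by
  induction j with
  | zero => simp [conjNum]
  | succ j ih =>
    rw [conjNum, Formula.realize_inf, ih, realize_substP, realize_numT, Nat.forall_lt_succ_right]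

theorem holds_conjShift (φ : OneVarFormula) (j : ℕ) (x : M) :
    Holds (conjShift φ j) x ↔ ∀ k < j, φ.Holds (x + k) := by
  induction j with
  | zero => simp [conjShift, Holds]
  | succ j ih =>
    rw [conjShift, holds_inf, ih, holds_substX, realize_addT, realize_numT, realize_xT,
      Sum.elim_inr, Nat.forall_lt_succ_right]

end OneVarFormula

open OneVarFormula

section Characterizations
variable {φ : OneVarFormula}

theorem isInductive_iff : IsInductive φ ↔ ∀ (M : Type) [Lor.Structure M] [M ⊨ PAminus],
    φ.Holds (0 : M) ∧ ∀ x : M, φ.Holds x → φ.Holds (x + 1) := by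
  simp only [IsInductive, models_closeAll_iff, forall_and]
  exact and_congr (forall₃_congr fun M _ _ => by simp) (forall₃_congr fun M _ _ => by simp)

theorem isStepInductive_iff (n : ℕ) : IsStepInductive n φ ↔
    ∀ (M : Type) [Lor.Structure M] [M ⊨ PAminus],
      (∀ k < n + 1, φ.Holds (k : M)) ∧ ∀ x : M, φ.Holds x → φ.Holds (x + (n + 1)) := by
  simp only [IsStepInductive, models_closeAll_iff]
  exact forall₃_congr fun M _ _ => by simp [realize_conjNum]

theorem isKInductive_iff (n : ℕ) : IsKInductive n φ ↔
    ∀ (M : Type) [Lor.Structure M] [M ⊨ PAminus], (∀ k < n + 1, φ.Holds (k : M)) ∧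
      ∀ x : M, (∀ k < n + 1, φ.Holds (x + k)) → φ.Holds (x + (n + 1)) := by
  simp only [IsKInductive, models_closeAll_iff]
  exact forall₃_congr fun M _ _ => by simp [realize_conjNum, holds_conjShift]

theorem isPInductive_iff : IsPInductive φ ↔ ∀ (M : Type) [Lor.Structure M] [M ⊨ PAminus],
    φ.Holds (0 : M) ∧ ∀ x : M, φ.Holds x → φ.Holds (2 * x) ∧ φ.Holds (2 * x + 1) := by
  simp only [IsPInductive, models_closeAll_iff]
  exact forall₃_congr fun M _ _ => by simp [twoT, one_add_one_eq_two]

theorem IsInductive.isStepInductive (h : IsInductive φ) (n : ℕ) : IsStepInductive n φ := by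
  refine (isStepInductive_iff n).2 fun M _ _ => ?_
  obtain ⟨h0, hsucc⟩ := isInductive_iff.1 h M
  have hadd (x : M) (hx : φ.Holds x) (k : ℕ) : φ.Holds (x + k) := by
    induction k with
    | zero => simpa using hx
    | succ k ih => simpa [add_assoc] using hsucc _ ih
  exact ⟨fun k _ => by simpa using hadd 0 h0 k, fun x hx => by simpa using hadd x hx (n + 1)⟩

end Characterizations

def xVar {n : ℕ} : Lor.Term ((Fin 0 ⊕ Fin 1) ⊕ Fin n) := var (Sum.inl (Sum.inr 0))

def sqrtFormula : OneVarFormula :=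
  ∃' ((ltBF (mulT &0 &0) xVar ⊔ mulT &0 &0 =' xVar) ⊓
    ltBF xVar (mulT (addT &0 oneT) (addT &0 oneT)))

noncomputable def residueFormula (n : ℕ) : OneVarFormula :=
  ∃' (BoundedFormula.iSup (fun k : Fin (n + 1) => xVar =' addT (mulT (numT (n + 2)) &0) (numT k)) ⊔
    (xVar =' addT (mulT (numT (n + 2)) &0) (numT (n + 1)) ⊓
      ∃' (&0 =' mulT twoT &1 ⊔ &0 =' addT (mulT twoT &1) oneT)))

section Models
variable {M : Type} [Lor.Structure M] [M ⊨ PAminus]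

theorem holds_sqrtFormula (x : M) :
    sqrtFormula.Holds x ↔ ∃ y, y * y ≤ x ∧ x < (y + 1) * (y + 1) := by
  simp only [Holds, sqrtFormula, Formula.Realize, BoundedFormula.realize_ex,
    BoundedFormula.realize_inf, BoundedFormula.realize_sup, BoundedFormula.realize_bdEqual,
    realize_ltBF, realize_mulT, realize_addT, realize_oneT]
  rfl

theorem holds_residueFormula (n : ℕ) (x : M) : (residueFormula n).Holds x ↔
    ∃ y, (∃ k < n + 1, x = (n + 2) * y + k) ∨ (x = (n + 2) * y + (n + 1) ∧ (Even y ∨ Odd y)) := by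
  simp only [Holds, residueFormula, Formula.Realize, BoundedFormula.realize_ex,
    BoundedFormula.realize_inf, BoundedFormula.realize_sup, BoundedFormula.realize_iSup,
    BoundedFormula.realize_bdEqual, realize_mulT, realize_addT, realize_oneT, realize_numT, twoT,
    one_add_one_eq_two, Fin.exists_iff, exists_prop, exists_or, Nat.cast_add, Nat.cast_ofNat,
    Nat.cast_one, even_iff_exists_two_mul, Odd]
  rfl

theorem holds_sqrtFormula_add_one {x : M} (h : sqrtFormula.Holds x) :
    sqrtFormula.Holds (x + 1) := by
  rw [holds_sqrtFormula] at h ⊢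
  obtain ⟨y, hyx, hxy⟩ := h
  rcases (PAminus.add_one_le_of_lt hxy).lt_or_eq with hlt | heq
  · exact ⟨y, hyx.trans le_self_add, hlt⟩
  · exact ⟨y + 1, heq.ge, heq ▸ mul_self_lt_mul_self zero_le (lt_add_one (y + 1))⟩

theorem holds_sqrtFormula_mul_self (a : M) : sqrtFormula.Holds (a * a) :=
  (holds_sqrtFormula _).2 ⟨a, le_rfl, mul_self_lt_mul_self zero_le (lt_add_one a)⟩

theorem isInductive_sqrtFormula : IsInductive sqrtFormula :=
  isInductive_iff.2 fun M _ _ =>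
    ⟨by simpa using holds_sqrtFormula_mul_self (0 : M), fun _ => holds_sqrtFormula_add_one⟩

theorem holds_residueFormula_of_even_or_odd {n k : ℕ} {y : M} (hy : Even y ∨ Odd y)
    (hk : k ≤ n + 1) : (residueFormula n).Holds ((n + 2) * y + k) := by
  rw [holds_residueFormula]
  rcases hk.lt_or_eq with hk | rfl
  · exact ⟨y, Or.inl ⟨k, hk, rfl⟩⟩
  · exact ⟨y, Or.inr ⟨by push_cast; rfl, hy⟩⟩

theorem holds_residueFormula_of_even {n k : ℕ} {y : M} (hy : Even y) (hk : k ≤ 2 * n + 3) :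
    (residueFormula n).Holds ((n + 2) * y + k) := by
  rcases le_or_gt k (n + 1) with hk' | hk'
  · exact holds_residueFormula_of_even_or_odd (Or.inl hy) hk'
  · -- carry `n + 2` into the quotient, which becomes odd
    obtain ⟨j, rfl⟩ := Nat.exists_eq_add_of_le' hk'
    convert holds_residueFormula_of_even_or_odd (n := n) (Or.inr hy.add_one)
      (show j ≤ n + 1 by omega) using 1
    push_cast
    ring

theorem isPInductive_residueFormula (n : ℕ) : IsPInductive (residueFormula n) := by
  refine isPInductive_iff.2 fun M _ _ => ⟨?_, fun x hx => ?_⟩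
  · simpa using holds_residueFormula_of_even (M := M) (n := n) (k := 0) .zero (by omega)
  · obtain ⟨y, k, hk, rfl⟩ : ∃ y, ∃ k ≤ n + 1, x = (n + 2) * y + k := by
      obtain ⟨y, ⟨k, hk, rfl⟩ | ⟨rfl, -⟩⟩ := (holds_residueFormula n x).1 hx
      exacts [⟨y, k, hk.le, rfl⟩, ⟨y, n + 1, le_rfl, by push_cast; rfl⟩]
    constructor
    · convert holds_residueFormula_of_even (even_two_mul y) (show 2 * k ≤ 2 * n + 3 by omega)
        using 1
      push_cast
      ring
    · convert holds_residueFormula_of_even (even_two_mul y) (show 2 * k + 1 ≤ 2 * n + 3 by omega)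
        using 1
      push_cast
      ring

end Models

open Polynomial

namespace Polynomial

theorem coeff_nonneg_of_natDegree_le {R : Type*} [Semiring R] [Preorder R] {p : R[X]}
    (hp : 0 ≤ p.leadingCoeff) {n : ℕ} (h : p.natDegree ≤ n) : 0 ≤ p.coeff n := by
  rcases h.lt_or_eq with h | rfl
  · rw [coeff_eq_zero_of_natDegree_lt h]
  · exact hp

variable {R : Type*} [CommRing R] [LinearOrder R] [IsStrictOrderedRing R] {p q : R[X]}

theorem leadingCoeff_add_pos_of_nonneg_of_pos (hp : 0 ≤ p.leadingCoeff)
    (hq : 0 < q.leadingCoeff) : 0 < (p + q).leadingCoeff := by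
  rcases lt_trichotomy p.degree q.degree with h | h | h
  · rwa [leadingCoeff_add_of_degree_lt h]
  · have hpos := add_pos_of_nonneg_of_pos hp hq
    rwa [leadingCoeff_add_of_degree_eq h hpos.ne']
  · rw [leadingCoeff_add_of_degree_lt' h]
    exact hp.lt_of_ne (leadingCoeff_ne_zero.2 (ne_zero_of_degree_gt h)).symm

theorem leadingCoeff_add_nonneg (hp : 0 ≤ p.leadingCoeff) (hq : 0 ≤ q.leadingCoeff) :
    0 ≤ (p + q).leadingCoeff := by
  rcases hq.lt_or_eq with hq | hq
  · exact (leadingCoeff_add_pos_of_nonneg_of_pos hp hq).le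
  · rwa [leadingCoeff_eq_zero.1 hq.symm, add_zero]

theorem natDegree_le_of_leadingCoeff_sub_nonneg (hp : 0 ≤ p.leadingCoeff)
    (h : 0 ≤ (q - p).leadingCoeff) : p.natDegree ≤ q.natDegree := by
  by_contra! hlt
  have hcoeff :=
    coeff_nonneg_of_natDegree_le h ((natDegree_sub_le q p).trans (max_le hlt.le le_rfl))
  rw [coeff_sub, coeff_eq_zero_of_natDegree_lt hlt, zero_sub, neg_nonneg] at hcoeff
  have hp0 : p = 0 := leadingCoeff_eq_zero.1 (le_antisymm hcoeff hp)
  simp [hp0] at hlt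

theorem leadingCoeff_le_of_leadingCoeff_sub_nonneg (h : 0 ≤ (q - p).leadingCoeff)
    (hd : p.natDegree = q.natDegree) : p.leadingCoeff ≤ q.leadingCoeff := by
  have hcoeff :=
    coeff_nonneg_of_natDegree_le h ((natDegree_sub_le q p).trans (by rw [hd, max_self]))
  rwa [coeff_sub, ← hd, coeff_natDegree, hd, coeff_natDegree, sub_nonneg] at hcoeff

theorem leadingCoeff_sub_one_nonneg_of_pos {p : ℤ[X]} (hp : 0 < p.leadingCoeff) :
    0 ≤ (p - 1).leadingCoeff := by
  rcases Nat.eq_zero_or_pos p.natDegree with h | h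
  · rw [eq_C_of_natDegree_eq_zero h, leadingCoeff_C] at hp
    rw [eq_C_of_natDegree_eq_zero h, ← C_1, ← C_sub, leadingCoeff_C]
    omega
  · rw [leadingCoeff_sub_of_degree_lt (by rwa [degree_one, ← natDegree_pos_iff_degree_pos])]
    exact hp.le

theorem not_sq_le_two_mul_X_sq_le_add_one_sq {p : ℤ[X]} (hp : 0 ≤ p.leadingCoeff) :
    ¬(0 ≤ (2 * X ^ 2 - p ^ 2).leadingCoeff ∧ 0 ≤ ((p + 1) ^ 2 - 2 * X ^ 2).leadingCoeff) := by
  rintro ⟨hle, hge⟩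
  have h2 : (2 * X ^ 2 : ℤ[X]) = C 2 * X ^ 2 := by rw [C_ofNat]
  have hdeg2 : (2 * X ^ 2 : ℤ[X]).natDegree = 2 := by
    rw [h2, natDegree_C_mul_X_pow 2 2 two_ne_zero]
  have hlc2 : (2 * X ^ 2 : ℤ[X]).leadingCoeff = 2 := by rw [h2, leadingCoeff_C_mul_X_pow]
  have hp1 : (p + 1).natDegree = p.natDegree := by rw [← C_1, natDegree_add_C]
  have hsq_le := natDegree_le_of_leadingCoeff_sub_nonneg (by rw [leadingCoeff_pow]; positivity) hle
  have hsq_ge := natDegree_le_of_leadingCoeff_sub_nonneg (by rw [hlc2]; norm_num) hge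
  rw [natDegree_pow, hdeg2] at hsq_le
  rw [natDegree_pow, hdeg2, hp1] at hsq_ge
  have hd : p.natDegree = 1 := by omega
  have hlc_le := leadingCoeff_le_of_leadingCoeff_sub_nonneg hle (by rw [natDegree_pow, hdeg2, hd])
  have hlc_ge :=
    leadingCoeff_le_of_leadingCoeff_sub_nonneg hge (by rw [natDegree_pow, hdeg2, hp1, hd])
  have hlc1 : (p + 1).leadingCoeff = p.leadingCoeff := by
    rw [leadingCoeff_add_of_degree_lt'
      (by rw [degree_one, ← natDegree_pos_iff_degree_pos, hd]; omega)]
  rw [leadingCoeff_pow, hlc2] at hlc_le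
  rw [leadingCoeff_pow, hlc2, hlc1] at hlc_ge
  rcases le_or_gt p.leadingCoeff 1 with h | h <;> nlinarith

end Polynomial

/-- The non-negative part of `ℤ[X]`, where `p < q` means that `q - p` has positive leading
coefficient; `X` is then larger than every numeral. -/
structure NonnegPoly where
  val : ℤ[X]
  nonneg : 0 ≤ val.leadingCoeff

namespace NonnegPoly

noncomputable instance : Lor.Structure NonnegPoly where
  funMap {n} f := match n, f with
    | _, .zero => fun _ => ⟨0, le_rfl⟩
    | _, .one => fun _ => ⟨1, zero_le_one.trans_eq leadingCoeff_one.symm⟩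
    | _, .add => fun v => ⟨(v 0).val + (v 1).val, leadingCoeff_add_nonneg (v 0).nonneg (v 1).nonneg⟩
    | _, .mul => fun v => ⟨(v 0).val * (v 1).val,
        leadingCoeff_mul (v 0).val (v 1).val ▸ mul_nonneg (v 0).nonneg (v 1).nonneg⟩
  RelMap {n} r := match n, r with
    | _, .lt => fun v => 0 < ((v 1).val - (v 0).val).leadingCoeff

@[simp] theorem val_zero : (0 : NonnegPoly).val = 0 := rfl

@[simp] theorem val_one : (1 : NonnegPoly).val = 1 := rfl

@[simp] theorem val_add (a b : NonnegPoly) : (a + b).val = a.val + b.val := rfl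

@[simp] theorem val_mul (a b : NonnegPoly) : (a * b).val = a.val * b.val := rfl

theorem lt_iff {a b : NonnegPoly} : a < b ↔ 0 < (b.val - a.val).leadingCoeff := Iff.rfl

theorem ext {a b : NonnegPoly} (h : a.val = b.val) : a = b := by
  cases a; cases b; cases h; rfl

instance : NonnegPoly ⊨ PAminus := model_PAminus_iff.2
  { add_assoc := fun a b c => ext (add_assoc ..)
    add_comm := fun a b => ext (add_comm ..)
    mul_assoc := fun a b c => ext (mul_assoc ..)
    mul_comm := fun a b => ext (mul_comm ..)
    mul_add := fun a b c => ext (mul_add ..)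
    add_zero := fun a => ext (add_zero _)
    mul_zero := fun a => ext (mul_zero _)
    mul_one := fun a => ext (mul_one _)
    lt_trans := fun a b c hab hbc => by
      rw [lt_iff] at *
      simpa using leadingCoeff_add_pos_of_nonneg_of_pos hab.le hbc
    lt_irrefl := fun a => by simp [lt_iff]
    lt_trichotomy := fun a b => by
      rcases lt_trichotomy 0 (b.val - a.val).leadingCoeff with h | h | h
      · exact Or.inl (Or.inl h)
      · exact Or.inl (Or.inr (ext (sub_eq_zero.1 (leadingCoeff_eq_zero.1 h.symm)).symm))
      · exact Or.inr (by rw [lt_iff, ← neg_sub, leadingCoeff_neg]; exact neg_pos.2 h)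
    add_lt_add_right := fun a b c h => by simpa [lt_iff] using h
    mul_lt_mul_right := fun a b c hc h => by
      have hc' : 0 < c.val.leadingCoeff :=
        c.nonneg.lt_of_ne (fun h0 => hc (ext (leadingCoeff_eq_zero.1 h0.symm)))
      rw [lt_iff, val_mul, val_mul, ← sub_mul, leadingCoeff_mul]
      exact mul_pos h hc'
    lt_iff_exists_add_one := fun a b => by
      refine ⟨fun h => ⟨⟨b.val - a.val - 1, leadingCoeff_sub_one_nonneg_of_pos h⟩,
        ext (by simp only [val_add, val_one]; ring)⟩, ?_⟩
      rintro ⟨c, rfl⟩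
      rw [lt_iff, val_add, val_add, val_one, add_assoc, add_sub_cancel_left]
      exact leadingCoeff_add_pos_of_nonneg_of_pos c.nonneg (by simp)
    zero_lt_one := by simp [lt_iff]
    one_le_of_pos := fun a h => by
      rw [lt_iff, val_zero, sub_zero] at h
      rcases (leadingCoeff_sub_one_nonneg_of_pos h).lt_or_eq with h1 | h1
      · exact Or.inl h1
      · exact Or.inr (ext (sub_eq_zero.1 (leadingCoeff_eq_zero.1 h1.symm)).symm)
    zero_le := fun a => by
      rcases a.nonneg.lt_or_eq with h | h
      · exact Or.inl (by simpa [lt_iff] using h)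
      · exact Or.inr (ext (leadingCoeff_eq_zero.1 h.symm).symm) }

noncomputable def valHom : NonnegPoly →+* ℤ[X] where
  toFun := val
  map_zero' := rfl
  map_one' := rfl
  map_add' _ _ := rfl
  map_mul' _ _ := rfl

@[simp] theorem val_natCast (k : ℕ) : (k : NonnegPoly).val = k := map_natCast valHom k

@[simp] theorem val_ofNat (k : ℕ) [k.AtLeastTwo] :
    (no_index (OfNat.ofNat k) : NonnegPoly).val = OfNat.ofNat k :=
  map_ofNat valHom k

theorem le_iff {a b : NonnegPoly} : a ≤ b ↔ 0 ≤ (b.val - a.val).leadingCoeff := by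
  rw [le_iff_lt_or_eq, lt_iff, le_iff_lt_or_eq (a := (0 : ℤ)), eq_comm (a := (0 : ℤ)),
    leadingCoeff_eq_zero, sub_eq_zero, eq_comm (a := b.val)]
  exact or_congr_right ⟨congrArg val, ext⟩

protected noncomputable def X : NonnegPoly := ⟨X, by rw [leadingCoeff_X]; exact zero_le_one⟩

@[simp] theorem val_X : NonnegPoly.X.val = X := rfl

theorem not_even_or_odd_X : ¬(Even NonnegPoly.X ∨ Odd NonnegPoly.X) := by
  rintro (⟨r, hr⟩ | ⟨r, hr⟩)
  · have := congrArg (fun a : NonnegPoly => a.val.coeff 1) hr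
    simp at this
    omega
  · have := congrArg (fun a : NonnegPoly => a.val.coeff 1) hr
    simp [two_mul, coeff_one] at this
    omega

theorem not_holds_sqrtFormula_two_mul_X_mul_X :
    ¬sqrtFormula.Holds (2 * (NonnegPoly.X * NonnegPoly.X)) := by
  rw [holds_sqrtFormula]
  rintro ⟨y, hle, hlt⟩
  have hle' := le_iff.1 hle
  have hge' := le_iff.1 hlt.le
  simp only [two_mul, val_add, val_mul, val_one, val_X] at hle' hge'
  refine not_sq_le_two_mul_X_sq_le_add_one_sq y.nonneg ⟨?_, ?_⟩
  · convert hle' using 3 <;> ring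
  · convert hge' using 3 <;> ring

theorem not_holds_residueFormula (n : ℕ) :
    ¬(residueFormula n).Holds ((n + 2) * NonnegPoly.X + (n + 1)) := by
  rw [holds_residueFormula]
  rintro ⟨y, ⟨k, hk, h⟩ | ⟨h, hy⟩⟩
  · -- constant terms: `n + 1 = (n + 2) * c + k` has no solution with `k ≤ n`
    have := congrArg (fun a : NonnegPoly => a.val.eval 0) h
    simp at this
    rcases le_or_gt (y.val.eval 0) 0 with h0 | h0 <;> nlinarith
  · have hXy : NonnegPoly.X = y :=
      (mul_left_cancel_iff_of_pos (by positivity)).1 (add_right_cancel h)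
    exact not_even_or_odd_X (hXy ▸ hy)

end NonnegPoly

theorem not_isPInductive_sqrtFormula : ¬IsPInductive sqrtFormula := fun h =>
  NonnegPoly.not_holds_sqrtFormula_two_mul_X_mul_X
    ((isPInductive_iff.1 h NonnegPoly).2 _ (holds_sqrtFormula_mul_self NonnegPoly.X)).1

theorem not_isKInductive_residueFormula (n : ℕ) : ¬IsKInductive n (residueFormula n) := fun h =>
  NonnegPoly.not_holds_residueFormula n (((isKInductive_iff n).1 h NonnegPoly).2 _ fun k hk =>
    (holds_residueFormula n _).2 ⟨_, Or.inl ⟨k, hk, rfl⟩⟩)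

/-- (1) There is a formula that is `(n+1)`-step inductive for every `n ∈ ℕ` but is not
p-inductive. (2) For every `n ∈ ℕ`, there is a p-inductive formula that is not
`(n+1)`-inductive. -/
theorem stmt17 :
    (∃ φ : OneVarFormula, (∀ n : ℕ, IsStepInductive n φ) ∧ ¬IsPInductive φ) ∧
      (∀ n : ℕ, ∃ φ : OneVarFormula, IsPInductive φ ∧ ¬IsKInductive n φ) :=
  ⟨⟨sqrtFormula, isInductive_sqrtFormula.isStepInductive, not_isPInductive_sqrtFormula⟩,
    fun n => ⟨residueFormula n, isPInductive_residueFormula n, not_isKInductive_residueFormula n⟩⟩
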